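/- Let o be a vertex with dist(s,o) = 1. Then for every iteration k with 1 ≤ k ≤ 1+δ, the truncated Bellman–Ford iterate y⁽ᵏ⁾(o) aggregates all walk representations of length up to k: ∑_{ℓ=1}^{k} ∑_{p ∈ P_ℓ(s,o)} weight(p) ≤ y⁽ᵏ⁾(o) in the canonical order of R (i.e., there exists c ∈ R with y⁽ᵏ⁾(o) equal to this sum plus c). -/

import Mathlib

open Finset

/-- The weight of a walk: the product of the edge weights `wt v_{i-1} v_i` along the
walk, with the length-0 walk having weight 1. -/
def SimpleGraph.Walk.weight {V : Type*} {G : SimpleGraph V} {R : Type*} [CommSemiring R]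
    (wt : V → V → R) {u v : V} (p : G.Walk u v) : R :=
  (p.darts.map fun d => wt d.fst d.snd).prod

/-- `pathSum G wt t s o = ∑_{p ∈ P_t(s,o)} weight(p)`, the sum of the weights of all
walks of length `t` from `s` to `o` in `G`. -/
def pathSum {V : Type*} [Fintype V] [DecidableEq V] (G : SimpleGraph V) [DecidableRel G.Adj]
    {R : Type*} [CommSemiring R] (wt : V → V → R) (t : ℕ) (s o : V) : R :=
  ∑ p ∈ G.finsetWalkLength t s o, p.weight wt

open Classical in
/-- The truncated Bellman–Ford iterates `y_δ⁽ᵗ⁾` with source `s` and offset `δ`: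
`y⁽⁰⁾(o) = 1` if `o = s` and `0` otherwise; for `t ≥ 1`, if `o` is reachable from `s`
and `dist(s,o) ≤ t ≤ dist(s,o) + δ` then `o` aggregates, over the constrained edge set
(neighbors `u` reachable from `s` with `dist(s,u) < dist(s,o) + δ`), the messages
`y⁽ᵗ⁻¹⁾(u) * wt u o`, plus `y⁽⁰⁾(o)`; otherwise `y⁽ᵗ⁾(o) = y⁽ᵗ⁻¹⁾(o)`. -/
noncomputable def truncBF {V : Type*} [Fintype V] (G : SimpleGraph V)
    {R : Type*} [CommSemiring R] (wt : V → V → R) (s : V) (δ : ℕ) : ℕ → V → R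
  | 0 => fun o => if o = s then 1 else 0
  | (t + 1) => fun o =>
      if G.Reachable s o ∧ G.dist s o ≤ t + 1 ∧ t + 1 ≤ G.dist s o + δ then
        (∑ u ∈ Finset.univ.filter
            (fun u => G.Adj u o ∧ G.Reachable s u ∧ G.dist s u < G.dist s o + δ),
          truncBF G wt s δ t u * wt u o) + (if o = s then 1 else 0)
      else truncBF G wt s δ t o

/-
Walk sums obey the untruncated Bellman–Ford recursion, since they are the entries of the powers
of the weighted adjacency matrix. By induction on `t`, `∑_{ℓ ≤ t} pathSum ℓ s u ≤ y⁽ᵗ⁾(u)`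
whenever `u` is reachable and `t ≤ dist(s,u) + δ`: a neighbour `v` of `u` that the truncation
discards has `dist(s,v) ≥ dist(s,u) + δ > t - 1`, so no walk of length `< t` reaches it, while every
kept neighbour satisfies the induction hypothesis because `dist(s,u) ≤ dist(s,v) + 1`. When
`dist(s,o) = 1` the length-`0` term vanishes.
-/

open SimpleGraph

def weightedAdjMatrix {V : Type*} (G : SimpleGraph V) [DecidableRel G.Adj] {R : Type*} [Zero R]
    (wt : V → V → R) : Matrix V V R :=
  Matrix.of fun u v => if G.Adj u v then wt u v else 0

@[simp]
theorem weightedAdjMatrix_apply {V : Type*} (G : SimpleGraph V) [DecidableRel G.Adj] {R : Type*}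
    [Zero R] (wt : V → V → R) (u v : V) :
    weightedAdjMatrix G wt u v = if G.Adj u v then wt u v else 0 :=
  rfl

theorem SimpleGraph.Walk.weight_cons {V : Type*} {G : SimpleGraph V} {R : Type*}
    [CommSemiring R] (wt : V → V → R) {u v w : V} (h : G.Adj u v) (p : G.Walk v w) :
    (Walk.cons h p).weight wt = wt u v * p.weight wt := by
  simp [Walk.weight]

section PathSum

variable {V : Type*} [Fintype V] [DecidableEq V] (G : SimpleGraph V) [DecidableRel G.Adj]
  {R : Type*} [CommSemiring R] (wt : V → V → R)

theorem pathSum_eq_weightedAdjMatrix_pow_apply (n : ℕ) (u v : V) :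
    pathSum G wt n u v = (weightedAdjMatrix G wt ^ n) u v := by
  induction n generalizing u with
  | zero =>
    obtain rfl | h := eq_or_ne u v <;>
      simp [pathSum, finsetWalkLength, Walk.weight, *]
  | succ n ih =>
    rw [pow_succ', Matrix.mul_apply, pathSum, finsetWalkLength, sum_biUnion]
    · simp only [weightedAdjMatrix_apply, ite_mul, zero_mul, ← sum_filter, ← ih]
      rw [sum_subtype _ (p := (· ∈ G.neighborSet u)) (by simp)]
      refine Fintype.sum_congr _ _ fun x => ?_
      rw [sum_map, pathSum, mul_sum]
      exact sum_congr rfl fun q _ => Walk.weight_cons wt x.2 q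
    · intro x _ y _ hxy
      simp only [Function.onFun, Finset.disjoint_left, mem_map]
      rintro _ ⟨p, -, rfl⟩ ⟨q, -, hqp⟩
      exact hxy (Subtype.ext (Walk.cons.inj hqp).1.symm)

theorem pathSum_zero (s o : V) : pathSum G wt 0 s o = if o = s then 1 else 0 := by
  simp only [pathSum_eq_weightedAdjMatrix_pow_apply, pow_zero, Matrix.one_apply, eq_comm]

theorem pathSum_succ (n : ℕ) (s o : V) :
    pathSum G wt (n + 1) s o = ∑ u ∈ univ.filter (G.Adj · o), pathSum G wt n s u * wt u o := by
  simp only [pathSum_eq_weightedAdjMatrix_pow_apply, pow_succ, Matrix.mul_apply,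
    weightedAdjMatrix_apply, mul_ite, mul_zero, sum_filter]

theorem pathSum_eq_zero_of_not_reachable {s o : V} (h : ¬G.Reachable s o) (n : ℕ) :
    pathSum G wt n s o = 0 :=
  sum_eq_zero fun p _ => absurd p.reachable h

theorem pathSum_eq_zero_of_lt_dist {n : ℕ} {s o : V} (h : n < G.dist s o) :
    pathSum G wt n s o = 0 :=
  sum_eq_zero fun p hp => absurd (mem_finsetWalkLength_iff.mp hp ▸ dist_le p) h.not_ge

theorem sum_range_succ_pathSum (t : ℕ) (s o : V) :
    ∑ ℓ ∈ range (t + 2), pathSum G wt ℓ s o =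
      (∑ u ∈ univ.filter (G.Adj · o), (∑ ℓ ∈ range (t + 1), pathSum G wt ℓ s u) * wt u o) +
        if o = s then 1 else 0 := by
  simp only [sum_range_succ' _ (t + 1), pathSum_succ, pathSum_zero, sum_mul]
  rw [sum_comm]

end PathSum

theorem sum_range_pathSum_le_truncBF {V : Type*} [Fintype V] [DecidableEq V] (G : SimpleGraph V)
    [DecidableRel G.Adj] {R : Type*} [CommSemiring R] [PartialOrder R] [CanonicallyOrderedAdd R]
    (wt : V → V → R) (s : V) (δ t : ℕ) (u : V) (hsu : G.Reachable s u)
    (ht : t ≤ G.dist s u + δ) :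
    ∑ ℓ ∈ range (t + 1), pathSum G wt ℓ s u ≤ truncBF G wt s δ t u := by
  induction t generalizing u with
  | zero =>
    by_cases hus : u = s <;> simp [pathSum_zero, truncBF, hus]
  | succ t ih =>
    by_cases hdist : G.dist s u ≤ t + 1
    · simp only [truncBF]
      rw [if_pos ⟨hsu, hdist, ht⟩, sum_range_succ_pathSum]
      -- the two indicators of `u = s` differ only in their `Decidable` instance
      refine add_le_add ?_ (le_of_eq (by congr))
      have hfar : ∀ v, ¬(G.Reachable s v ∧ G.dist s v < G.dist s u + δ) →
          ∑ ℓ ∈ range (t + 1), pathSum G wt ℓ s v = 0 := by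
        intro v hv
        refine sum_eq_zero fun ℓ hℓ => ?_
        by_cases hsv : G.Reachable s v
        · exact pathSum_eq_zero_of_lt_dist G wt (by grind)
        · exact pathSum_eq_zero_of_not_reachable G wt hsv ℓ
      refine (sum_subset ?_ ?_).symm.trans_le (sum_le_sum fun v hv => ?_)
      · intro v hv
        simp_all
      · intro v hv hv'
        rw [hfar v (by simp_all), zero_mul]
      simp only [mem_filter, mem_univ, true_and] at hv
      exact mul_le_mul_left (ih v hv.2.1 (by grind [hv.1.diff_dist_adj (u := s)])) _
    · simp only [truncBF]
      rw [if_neg (by tauto), sum_range_succ, pathSum_eq_zero_of_lt_dist G wt (by omega),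
        add_zero]
      exact ih u hsu (by omega)

theorem truncBF_one_hop_iterate_ge_pathSum_general {V : Type*} [Fintype V] [DecidableEq V]
    (G : SimpleGraph V) [DecidableRel G.Adj] {R : Type*} [CommSemiring R] [PartialOrder R]
    [CanonicallyOrderedAdd R]
    (wt : V → V → R) (s : V) (δ : ℕ) (o : V) (hdist : G.dist s o = 1)
    (k : ℕ) (hk₂ : k ≤ 1 + δ) :
    ∑ ℓ ∈ Finset.Icc 1 k, pathSum G wt ℓ s o ≤ truncBF G wt s δ k o := by
  have hadj : G.Adj s o := dist_eq_one_iff_adj.mp hdist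
  calc ∑ ℓ ∈ Icc 1 k, pathSum G wt ℓ s o = ∑ ℓ ∈ range (k + 1), pathSum G wt ℓ s o := by
        rw [range_eq_Ico, sum_eq_sum_Ico_succ_bot k.succ_pos, pathSum_zero, if_neg hadj.ne',
          zero_add]
        rfl
    _ ≤ truncBF G wt s δ k o :=
        sum_range_pathSum_le_truncBF G wt s δ k o hadj.reachable (by omega)

/-- Let `o` be a vertex with `dist(s,o) = 1`. Then for every iteration
`k` with `1 ≤ k ≤ 1 + δ`, the truncated Bellman–Ford iterate `y⁽ᵏ⁾(o)` aggregates all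
walk representations of length up to `k`:
`∑_{ℓ=1}^{k} ∑_{p ∈ P_ℓ(s,o)} weight(p) ≤ y⁽ᵏ⁾(o)` in the canonical order of `R`. -/
theorem truncBF_one_hop_iterate_ge_pathSum {V : Type*} [Fintype V] [DecidableEq V]
    (G : SimpleGraph V) [DecidableRel G.Adj] {R : Type*} [CommSemiring R] [PartialOrder R]
    [IsOrderedRing R] [CanonicallyOrderedAdd R] [NoZeroDivisors R]
    (wt : V → V → R) (s : V) (δ : ℕ) (o : V) (hdist : G.dist s o = 1)
    (k : ℕ) (hk₁ : 1 ≤ k) (hk₂ : k ≤ 1 + δ) :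
    ∑ ℓ ∈ Finset.Icc 1 k, pathSum G wt ℓ s o ≤ truncBF G wt s δ k o :=
  truncBF_one_hop_iterate_ge_pathSum_general G wt s δ o hdist k hk₂
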